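/- arXiv:2503.06838 — 4 statements merged into one kernel-verified Lean document; each statement's English description precedes it below -/
import Mathlib

section
/- Duality gap bound: Under the compact setup, for every θ ∈ Θ and every pair (ψ^{c̄}, ψ) of Kantorovich potentials for W_c((T_θ)_#μ, ν), one has 0 ≤ ( W_c((T_θ)_#μ, ν) + R(θ) ) − W_c^{↓,R}(μ,ν) ≤ I_ψ(θ) − min_{Θ} I_ψ, where I_ψ(θ) := ∫_X ψ^{c̄}(T_θ x) dμ(x) + R(θ). -/
open MeasureTheory

/-- The optimal transport cost between two measures on `Z` for cost `c`. -/
noncomputable def transportCost {Z : Type*} [MeasurableSpace Z]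
    (c : Z × Z → ℝ) (α β : Measure Z) : ℝ :=
  sInf { v : ℝ | ∃ π : Measure (Z × Z),
    π.map Prod.fst = α ∧ π.map Prod.snd = β ∧ v = ∫ p, c p ∂π }

/-- The penalized Wasserstein alignment value `W_c^{↓,R}(μ,ν)`. -/
noncomputable def alignVal {X Θ Z : Type*} [MeasurableSpace X] [MeasurableSpace Z]
    (c : Z × Z → ℝ) (T : Θ → X → Z) (R : Θ → ℝ)
    (μ : Measure X) (ν : Measure Z) : ℝ :=
  ⨅ θ : Θ, (transportCost c (μ.map (T θ)) ν + R θ)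

/-- The `c`-transform of an extended-real-valued function `φ : Z → [−∞,∞]`:
`φ^c(z) = inf_y (c(y,z) − φ(y))`. -/
noncomputable def ctransE {Z : Type*} (c : Z × Z → ℝ) (φ : Z → EReal) : Z → EReal :=
  fun z => ⨅ y, ((c (y, z) : EReal) - φ y)

/-- A real-valued `ψ : Z → ℝ` is `c̄`-concave if `ψ = φ^c` for some `φ : Z → [−∞,∞]`. -/
def IsCbarConcave {Z : Type*} (c : Z × Z → ℝ) (ψ : Z → ℝ) : Prop :=
  ∃ φ : Z → EReal, ∀ z, (ψ z : EReal) = ctransE c φ z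

/-- The `c̄`-transform of a real-valued function: `ψ^{c̄}(y) = inf_z (c(y,z) − ψ(z))`. -/
noncomputable def cbarT {Z : Type*} (c : Z × Z → ℝ) (ψ : Z → ℝ) : Z → ℝ :=
  fun y => ⨅ z, (c (y, z) - ψ z)

/-- The functional `I_ψ(θ) = ∫ ψ^{c̄}(T_θ x) dμ(x) + R(θ)`. -/
noncomputable def Ipen {X Θ Z : Type*} [MeasurableSpace X]
    (c : Z × Z → ℝ) (T : Θ → X → Z) (R : Θ → ℝ) (μ : Measure X)
    (ψ : Z → ℝ) (θ : Θ) : ℝ :=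
  (∫ x, cbarT c ψ (T θ x) ∂μ) + R θ

/- ### Auxiliary lemmas -/

lemma ereal_sub_sub (a e : ℝ) (b : EReal) :
    ((a : EReal) - b) - (e : EReal) = (((a - e : ℝ)) : EReal) - b := by
  rw [EReal.coe_sub, sub_eq_add_neg ((a : EReal)) b,
    sub_eq_add_neg (((a : EReal)) + -b) ((e : EReal)),
    sub_eq_add_neg ((a : EReal)) ((e : EReal)), sub_eq_add_neg _ b]
  exact add_right_comm _ _ _

lemma cont_integrable {W : Type*} [TopologicalSpace W] [CompactSpace W]
    [MeasurableSpace W] [OpensMeasurableSpace W] [T2Space W]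
    {f : W → ℝ} (hf : Continuous f) (m : Measure W) [IsFiniteMeasure m] :
    Integrable f m :=
  hf.integrable_of_hasCompactSupport ((isClosed_tsupport f).isCompact)

lemma psi_facts {Z : Type*} [MetricSpace Z] [CompactSpace Z] [Nonempty Z]
    (c : Z × Z → ℝ) (hc : Continuous c) (ψ : Z → ℝ)
    (φ : Z → EReal) (hφ : ∀ z, (ψ z : EReal) = ⨅ y, ((c (y, z) : EReal) - φ y)) :
    (∃ B0 B1 : ℝ, (∀ z, B0 ≤ ψ z) ∧ (∀ z, ψ z ≤ B1)) ∧ Continuous ψ := by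
  obtain ⟨M, hM⟩ : ∃ M, ∀ p : Z × Z, |c p| ≤ M := by
    obtain ⟨M, hM⟩ := isCompact_univ.exists_bound_of_continuousOn hc.continuousOn
    exact ⟨M, fun p => by simpa using hM p (Set.mem_univ p)⟩
  set z0 : Z := Classical.arbitrary Z
  obtain ⟨y0, hy0⟩ : ∃ y, ((c (y, z0) : EReal) - φ y) < ((ψ z0 + 1 : ℝ) : EReal) := by
    rw [← iInf_lt_iff, ← hφ z0]
    exact_mod_cast (lt_add_one (ψ z0))
  have hφtop : φ y0 ≠ ⊤ := by
    intro h
    have h1 : ((ψ z0 : ℝ) : EReal) ≤ (c (y0, z0) : EReal) - φ y0 :=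
      (hφ z0) ▸ iInf_le (fun y => ((c (y, z0) : EReal) - φ y)) y0
    rw [h, EReal.sub_top] at h1
    exact (EReal.coe_ne_bot (ψ z0)) (le_bot_iff.mp h1)
  have hφbot : φ y0 ≠ ⊥ := by
    intro h
    rw [h, EReal.coe_sub_bot] at hy0
    exact (not_top_lt hy0)
  set r : ℝ := (φ y0).toReal with hr
  have hry0 : ((r : ℝ) : EReal) = φ y0 := EReal.coe_toReal hφtop hφbot
  have hub : ∀ z, ψ z ≤ M - r := by
    intro z
    have h1 : ((ψ z : ℝ) : EReal) ≤ (c (y0, z) : EReal) - φ y0 :=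
      (hφ z) ▸ iInf_le (fun y => ((c (y, z) : EReal) - φ y)) y0
    rw [← hry0, ← EReal.coe_sub] at h1
    have h3 := EReal.coe_le_coe_iff.mp h1
    have h2 := (abs_le.mp (hM (y0, z))).2
    linarith
  have hlb : ∀ z, ψ z0 - 2 * M ≤ ψ z := by
    intro z
    have key : ((ψ z0 - 2 * M : ℝ) : EReal) ≤ ((ψ z : ℝ) : EReal) := by
      rw [hφ z]
      refine le_iInf fun y => ?_
      have h1 : ((ψ z0 : ℝ) : EReal) ≤ (c (y, z0) : EReal) - φ y :=
        (hφ z0) ▸ iInf_le (fun y => ((c (y, z0) : EReal) - φ y)) y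
      have h2 : (c (y, z0) : EReal) - φ y ≤ ((c (y, z) + 2 * M : ℝ) : EReal) - φ y := by
        refine EReal.sub_le_sub ?_ le_rfl
        have ha := (abs_le.mp (hM (y, z0))).2
        have hb := (abs_le.mp (hM (y, z))).1
        exact_mod_cast (by linarith : c (y, z0) ≤ c (y, z) + 2 * M)
      calc ((ψ z0 - 2 * M : ℝ) : EReal)
          = ((ψ z0 : ℝ) : EReal) - ((2 * M : ℝ) : EReal) := by rw [EReal.coe_sub]
        _ ≤ (((c (y, z) + 2 * M : ℝ) : EReal) - φ y) - ((2 * M : ℝ) : EReal) :=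
            EReal.sub_le_sub (h1.trans h2) le_rfl
        _ = ((c (y, z) + 2 * M - 2 * M : ℝ) : EReal) - φ y := ereal_sub_sub _ _ _
        _ = ((c (y, z) : ℝ) : EReal) - φ y := by norm_num
    exact EReal.coe_le_coe_iff.mp key
  refine ⟨⟨ψ z0 - 2 * M, M - r, hlb, hub⟩, ?_⟩
  rw [Metric.continuous_iff]
  intro b ε hε
  obtain ⟨δ, hδ, hδc⟩ := Metric.uniformContinuous_iff.mp
    (CompactSpace.uniformContinuous_of_continuous hc) (ε / 2) (by linarith)
  refine ⟨δ, hδ, fun a ha => ?_⟩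
  have key : ∀ z z' : Z, dist z z' < δ → ψ z ≤ ψ z' + ε / 2 := by
    intro z z' h
    have h2 : ((ψ z - ε / 2 : ℝ) : EReal) ≤ ((ψ z' : ℝ) : EReal) := by
      rw [hφ z']
      refine le_iInf fun y => ?_
      have hcd : |c (y, z) - c (y, z')| < ε / 2 := by
        have hd : dist ((y, z) : Z × Z) (y, z') < δ := by
          rw [Prod.dist_eq, dist_self, max_eq_right dist_nonneg]
          exact h
        simpa [Real.dist_eq] using hδc hd
      have h1 : ((ψ z : ℝ) : EReal) ≤ (c (y, z) : EReal) - φ y :=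
        (hφ z) ▸ iInf_le (fun y => ((c (y, z) : EReal) - φ y)) y
      calc ((ψ z - ε / 2 : ℝ) : EReal)
          = ((ψ z : ℝ) : EReal) - ((ε / 2 : ℝ) : EReal) := by rw [EReal.coe_sub]
        _ ≤ ((c (y, z) : EReal) - φ y) - ((ε / 2 : ℝ) : EReal) := EReal.sub_le_sub h1 le_rfl
        _ = ((c (y, z) - ε / 2 : ℝ) : EReal) - φ y := ereal_sub_sub _ _ _
        _ ≤ ((c (y, z') : ℝ) : EReal) - φ y := by
            refine EReal.sub_le_sub ?_ le_rfl
            have := (abs_lt.mp hcd).2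
            exact_mod_cast (by linarith : c (y, z) - ε / 2 ≤ c (y, z'))
    have := EReal.coe_le_coe_iff.mp h2
    linarith
  have h1 := key a b ha
  have h2 := key b a (by rwa [dist_comm])
  rw [Real.dist_eq, abs_lt]
  constructor <;> linarith

lemma cbar_facts {Z : Type*} [MetricSpace Z] [CompactSpace Z] [Nonempty Z]
    (c : Z × Z → ℝ) (hc : Continuous c) (ψ : Z → ℝ)
    (B0 B1 : ℝ) (hlb : ∀ z, B0 ≤ ψ z) (hub : ∀ z, ψ z ≤ B1) :
    (∀ y z, cbarT c ψ y ≤ c (y, z) - ψ z) ∧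
    (∃ C0 C1 : ℝ, ∀ y, C0 ≤ cbarT c ψ y ∧ cbarT c ψ y ≤ C1) ∧
    Continuous (cbarT c ψ) := by
  obtain ⟨M, hM⟩ : ∃ M, ∀ p : Z × Z, |c p| ≤ M := by
    obtain ⟨M, hM⟩ := isCompact_univ.exists_bound_of_continuousOn hc.continuousOn
    exact ⟨M, fun p => by simpa using hM p (Set.mem_univ p)⟩
  have hbdd : ∀ y, BddBelow (Set.range fun z => c (y, z) - ψ z) := by
    intro y
    refine ⟨-M - B1, ?_⟩
    rintro _ ⟨z, rfl⟩
    have h1 := (abs_le.mp (hM (y, z))).1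
    have h2 := hub z
    simp only
    linarith
  have hkey : ∀ y z, cbarT c ψ y ≤ c (y, z) - ψ z := fun y z => ciInf_le (hbdd y) z
  have hlow : ∀ y, -M - B1 ≤ cbarT c ψ y := by
    intro y
    refine le_ciInf fun z => ?_
    have h1 := (abs_le.mp (hM (y, z))).1
    have h2 := hub z
    linarith
  have hhigh : ∀ y, cbarT c ψ y ≤ M - B0 := by
    intro y
    refine (hkey y (Classical.arbitrary Z)).trans ?_
    have h1 := (abs_le.mp (hM (y, Classical.arbitrary Z))).2
    have h2 := hlb (Classical.arbitrary Z)
    linarith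
  refine ⟨hkey, ⟨-M - B1, M - B0, fun y => ⟨hlow y, hhigh y⟩⟩, ?_⟩
  rw [Metric.continuous_iff]
  intro b ε hε
  obtain ⟨δ, hδ, hδc⟩ := Metric.uniformContinuous_iff.mp
    (CompactSpace.uniformContinuous_of_continuous hc) (ε / 2) (by linarith)
  refine ⟨δ, hδ, fun a ha => ?_⟩
  have key : ∀ y y' : Z, dist y y' < δ → cbarT c ψ y ≤ cbarT c ψ y' + ε / 2 := by
    intro y y' h
    have h2 : cbarT c ψ y - ε / 2 ≤ cbarT c ψ y' := by
      refine le_ciInf fun z => ?_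
      have hcd : |c (y, z) - c (y', z)| < ε / 2 := by
        have hd : dist ((y, z) : Z × Z) (y', z) < δ := by
          rw [Prod.dist_eq, dist_self, max_eq_left dist_nonneg]
          exact h
        simpa [Real.dist_eq] using hδc hd
      have h1 := hkey y z
      have := (abs_lt.mp hcd).2
      linarith
    linarith
  have h1 := key a b ha
  have h2 := key b a (by rwa [dist_comm])
  rw [Real.dist_eq, abs_lt]
  constructor <;> linarith

lemma weak_duality {Z : Type*} [MetricSpace Z] [CompactSpace Z]
    [MeasurableSpace Z] [BorelSpace Z] [Nonempty Z]
    (c : Z × Z → ℝ) (hc : Continuous c) (ψ : Z → ℝ) (hψ : Continuous ψ)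
    (g : Z → ℝ) (hg : Continuous g) (hkey : ∀ y z, g y + ψ z ≤ c (y, z))
    (α ν : Measure Z) [IsProbabilityMeasure α] [IsProbabilityMeasure ν] :
    (∫ y, g y ∂α) + ∫ z, ψ z ∂ν ≤ transportCost c α ν := by
  refine le_csInf ⟨_, α.prod ν, by simp, by simp, rfl⟩ ?_
  rintro v ⟨π, hπ1, hπ2, rfl⟩
  haveI : IsProbabilityMeasure π := by
    constructor
    have h : π.map Prod.fst Set.univ = 1 := by rw [hπ1]; exact measure_univ
    rwa [Measure.map_apply measurable_fst MeasurableSet.univ, Set.preimage_univ] at h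
  have hint_c : Integrable c π := cont_integrable hc π
  have hint1 : Integrable (fun p : Z × Z => g p.1) π :=
    cont_integrable (hg.comp continuous_fst) π
  have hint2 : Integrable (fun p : Z × Z => ψ p.2) π :=
    cont_integrable (hψ.comp continuous_snd) π
  have hmono : ∫ p, (g p.1 + ψ p.2) ∂π ≤ ∫ p, c p ∂π :=
    integral_mono (hint1.add hint2) hint_c (fun p => hkey p.1 p.2)
  rw [integral_add hint1 hint2] at hmono
  have hfst : ∫ p, g p.1 ∂π = ∫ y, g y ∂α := by
    rw [← hπ1]
    exact (integral_map measurable_fst.aemeasurable hg.aestronglyMeasurable).symm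
  have hsnd : ∫ p, ψ p.2 ∂π = ∫ z, ψ z ∂ν := by
    rw [← hπ2]
    exact (integral_map measurable_snd.aemeasurable hψ.aestronglyMeasurable).symm
  rw [hfst, hsnd] at hmono
  exact hmono

/-- Duality gap bound: for any `θ ∈ Θ` and any pair `(ψ^{c̄}, ψ)` of Kantorovich potentials
for `W_c((T_θ)_#μ, ν)`, one has
`0 ≤ (W_c((T_θ)_#μ,ν) + R(θ)) − W_c^{↓,R}(μ,ν) ≤ I_ψ(θ) − min_Θ I_ψ`. -/
theorem duality_gap_bound
    {X Z Θ : Type*}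
    [MetricSpace X] [CompactSpace X] [MeasurableSpace X] [BorelSpace X]
    [MetricSpace Z] [CompactSpace Z] [MeasurableSpace Z] [BorelSpace Z] [Nonempty Z]
    [MetricSpace Θ] [CompactSpace Θ] [Nonempty Θ]
    (T : Θ → X → Z) (hT : Continuous fun p : Θ × X => T p.1 p.2)
    (c : Z × Z → ℝ) (hc : Continuous c)
    (R : Θ → ℝ) (hR : Continuous R)
    (μ : Measure X) [IsProbabilityMeasure μ]
    (ν : Measure Z) [IsProbabilityMeasure ν]
    (θ : Θ) (ψ : Z → ℝ) (hψ : IsCbarConcave c ψ)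
    (hpot : transportCost c (μ.map (T θ)) ν
      = (∫ y, cbarT c ψ y ∂(μ.map (T θ))) + ∫ z, ψ z ∂ν) :
    0 ≤ (transportCost c (μ.map (T θ)) ν + R θ) - alignVal c T R μ ν ∧
    (transportCost c (μ.map (T θ)) ν + R θ) - alignVal c T R μ ν
      ≤ Ipen c T R μ ψ θ - ⨅ θ' : Θ, Ipen c T R μ ψ θ' := by
  classical
  obtain ⟨φ, hφ⟩ := hψ
  simp only [ctransE] at hφ
  obtain ⟨⟨B0, B1, hlb, hub⟩, hψc⟩ := psi_facts c hc ψ φ hφ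
  obtain ⟨hkey, ⟨C0, C1, hC⟩, hcbc⟩ := cbar_facts c hc ψ B0 B1 hlb hub
  have hTcont : ∀ θ' : Θ, Continuous (T θ') := fun θ' => hT.comp (Continuous.prodMk_right θ')
  haveI hprob : ∀ θ' : Θ, IsProbabilityMeasure (μ.map (T θ')) :=
    fun θ' => Measure.isProbabilityMeasure_map ((hTcont θ').measurable.aemeasurable)
  have hchg : ∀ θ' : Θ, ∫ y, cbarT c ψ y ∂(μ.map (T θ')) = ∫ x, cbarT c ψ (T θ' x) ∂μ :=
    fun θ' => integral_map ((hTcont θ').measurable.aemeasurable) hcbc.aestronglyMeasurable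
  have hweak : ∀ θ' : Θ,
      (∫ x, cbarT c ψ (T θ' x) ∂μ) + ∫ z, ψ z ∂ν ≤ transportCost c (μ.map (T θ')) ν := by
    intro θ'
    haveI := hprob θ'
    rw [← hchg θ']
    exact weak_duality c hc ψ hψc _ hcbc
      (fun y z => by have := hkey y z; linarith) _ ν
  obtain ⟨CR, hCR⟩ := isCompact_univ.exists_bound_of_continuousOn hR.continuousOn
  have hRlb : ∀ θ' : Θ, -CR ≤ R θ' := by
    intro θ'
    have := hCR θ' (Set.mem_univ _)
    rw [Real.norm_eq_abs] at this
    linarith [(abs_le.mp this).1]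
  have hIlb : ∀ θ' : Θ, C0 - CR ≤ Ipen c T R μ ψ θ' := by
    intro θ'
    have hint : Integrable (fun x => cbarT c ψ (T θ' x)) μ :=
      cont_integrable (hcbc.comp (hTcont θ')) μ
    have h1 : C0 ≤ ∫ x, cbarT c ψ (T θ' x) ∂μ := by
      have := integral_mono (integrable_const C0) hint (fun x => (hC (T θ' x)).1)
      simpa [measure_univ] using this
    have h2 := hRlb θ'
    simp only [Ipen]
    linarith
  have hIbdd : BddBelow (Set.range (Ipen c T R μ ψ)) :=
    ⟨C0 - CR, by rintro _ ⟨θ', rfl⟩; exact hIlb θ'⟩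
  have hTCbdd : BddBelow (Set.range fun θ' : Θ =>
      transportCost c (μ.map (T θ')) ν + R θ') := by
    refine ⟨(C0 - CR) + ∫ z, ψ z ∂ν, ?_⟩
    rintro _ ⟨θ', rfl⟩
    have ha := hweak θ'
    have hb := hIlb θ'
    simp only [Ipen] at hb
    have hc2 := hRlb θ'
    simp only
    linarith
  have h1 : alignVal c T R μ ν ≤ transportCost c (μ.map (T θ)) ν + R θ := by
    show (⨅ θ' : Θ, (transportCost c (μ.map (T θ')) ν + R θ')) ≤ _
    exact ciInf_le hTCbdd θ
  have h2 : (⨅ θ' : Θ, Ipen c T R μ ψ θ') + ∫ z, ψ z ∂ν ≤ alignVal c T R μ ν := by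
    show _ ≤ ⨅ θ' : Θ, (transportCost c (μ.map (T θ')) ν + R θ')
    refine le_ciInf fun θ' => ?_
    have ha : (⨅ θ'' : Θ, Ipen c T R μ ψ θ'') ≤ Ipen c T R μ ψ θ' := ciInf_le hIbdd θ'
    have hb2 : Ipen c T R μ ψ θ' + ∫ z, ψ z ∂ν
        ≤ transportCost c (μ.map (T θ')) ν + R θ' := by
      simp only [Ipen]
      linarith [hweak θ']
    linarith
  have h3 : transportCost c (μ.map (T θ)) ν + R θ = Ipen c T R μ ψ θ + ∫ z, ψ z ∂ν := by
    simp only [Ipen]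
    rw [hpot, hchg θ]
    ring
  constructor
  · linarith
  · linarith
end

section
/- Existence of an optimal parameter: Under the compact setup, for any Borel probability measures μ on X and ν on Z there exists θ_* ∈ Θ which is optimal for W_c^{↓,R}(μ,ν), i.e. W_c((T_{θ_*})_#μ, ν) + R(θ_*) = inf_{θ ∈ Θ} { W_c((T_θ)_#μ, ν) + R(θ) }. -/
open MeasureTheory

open scoped ProbabilityTheory

section AuxLemmas

/-- A continuous function on a compact metric space is integrable for a finite measure. -/
lemma aux_cont_integrable {Y : Type*} [MetricSpace Y] [CompactSpace Y] [MeasurableSpace Y]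
    [OpensMeasurableSpace Y] (f : Y → ℝ) (hf : Continuous f) (m : Measure Y)
    [IsFiniteMeasure m] : Integrable f m := by
  rcases isEmpty_or_nonempty Y with h | h
  · have hm : m = 0 := by
      ext s _
      simp [Set.eq_empty_of_isEmpty s]
    simp [hm]
  · obtain ⟨y₀, -, hy₀⟩ := isCompact_univ.exists_isMaxOn Set.univ_nonempty
      ((continuous_norm.comp hf).continuousOn)
    exact ⟨hf.aestronglyMeasurable,
      HasFiniteIntegral.of_bounded (C := ‖f y₀‖)
        (Filter.Eventually.of_forall fun y => isMaxOn_iff.mp hy₀ y trivial)⟩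

/-- If the first marginal of a measure on a product is a probability measure, so is the measure. -/
lemma aux_prob_of_map_fst {A B : Type*} [MeasurableSpace A] [MeasurableSpace B]
    {σ : Measure (A × B)} {m : Measure A} [IsProbabilityMeasure m]
    (h : σ.map Prod.fst = m) : IsProbabilityMeasure σ := by
  constructor
  have hh : σ.map Prod.fst Set.univ = σ Set.univ := by
    rw [Measure.map_apply measurable_fst MeasurableSet.univ, Set.preimage_univ]
  rw [h] at hh
  rw [← hh]
  exact measure_univ

end AuxLemmas

/-- Existence of an optimal parameter: there exists `θstar ∈ Θ` achieving
`W_c^{↓,R}(μ,ν) = inf_θ { W_c((T_θ)_#μ,ν) + R(θ) }`. -/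
theorem exists_optimal_param
    {X Z Θ : Type*}
    [MetricSpace X] [CompactSpace X] [MeasurableSpace X] [BorelSpace X]
    [MetricSpace Z] [CompactSpace Z] [MeasurableSpace Z] [BorelSpace Z]
    [MetricSpace Θ] [CompactSpace Θ] [Nonempty Θ]
    (T : Θ → X → Z) (hT : Continuous fun p : Θ × X => T p.1 p.2)
    (c : Z × Z → ℝ) (hc : Continuous c)
    (R : Θ → ℝ) (hR : Continuous R)
    (μ : Measure X) [IsProbabilityMeasure μ]
    (ν : Measure Z) [IsProbabilityMeasure ν] :
    ∃ θstar : Θ, transportCost c (μ.map (T θstar)) ν + R θstar = alignVal c T R μ ν := by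
  classical
  -- `Z` is nonempty since it carries a probability measure
  haveI hZne : Nonempty Z := by
    by_contra h
    rw [not_nonempty_iff] at h
    have h1 : ν Set.univ = 1 := measure_univ
    rw [Set.eq_empty_of_isEmpty (Set.univ : Set Z)] at h1
    simp at h1
  haveI : StandardBorelSpace Z := inferInstance
  -- the set of values of couplings
  set S : Θ → Set ℝ := fun θ => { v : ℝ | ∃ π : Measure (Z × Z),
    π.map Prod.fst = μ.map (T θ) ∧ π.map Prod.snd = ν ∧ v = ∫ p, c p ∂π } with hSdef
  have hW : ∀ θ, transportCost c (μ.map (T θ)) ν = sInf (S θ) := fun θ => rfl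
  have hTc : ∀ θ, Continuous (T θ) := fun θ => hT.comp (Continuous.prodMk_right θ)
  have hTm : ∀ θ, Measurable (T θ) := fun θ => (hTc θ).measurable
  haveI hprob : ∀ θ, IsProbabilityMeasure (μ.map (T θ)) := fun θ =>
    Measure.isProbabilityMeasure_map (hTm θ).aemeasurable
  -- lower bound on all coupling values
  obtain ⟨pmin, -, hpmin'⟩ := isCompact_univ.exists_isMinOn Set.univ_nonempty hc.continuousOn
  have hpmin := isMinOn_iff.mp hpmin'
  have hbdd : ∀ θ, ∀ v ∈ S θ, c pmin ≤ v := by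
    rintro θ v ⟨π, h1, h2, rfl⟩
    haveI := aux_prob_of_map_fst h1
    calc c pmin = ∫ _, c pmin ∂π := by simp
      _ ≤ ∫ p, c p ∂π :=
        integral_mono (integrable_const _) (aux_cont_integrable c hc π) fun p => hpmin p trivial
  have hBdd : ∀ θ, BddBelow (S θ) := fun θ => ⟨c pmin, fun v hv => hbdd θ v hv⟩
  -- the coupling set is nonempty
  have hne : ∀ θ, (S θ).Nonempty := by
    intro θ
    exact ⟨_, (μ.map (T θ)).prod ν, Measure.fst_prod, Measure.snd_prod, rfl⟩
  -- Lemma A: any coupling of μ and ν on X × Z gives an upper bound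
  have lemA : ∀ θ (σ : Measure (X × Z)), σ.map Prod.fst = μ → σ.map Prod.snd = ν →
      sInf (S θ) ≤ ∫ p, c (T θ p.1, p.2) ∂σ := by
    intro θ σ h1 h2
    haveI : IsProbabilityMeasure σ := aux_prob_of_map_fst h1
    have hg : Measurable (fun p : X × Z => (T θ p.1, p.2)) :=
      ((hTm θ).comp measurable_fst).prodMk measurable_snd
    refine csInf_le (hBdd θ) ⟨σ.map (fun p : X × Z => (T θ p.1, p.2)), ?_, ?_, ?_⟩
    · rw [Measure.map_map measurable_fst hg]
      have he : (Prod.fst ∘ fun p : X × Z => (T θ p.1, p.2)) = T θ ∘ Prod.fst := rfl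
      rw [he, ← Measure.map_map (hTm θ) measurable_fst, h1]
    · rw [Measure.map_map measurable_snd hg]
      have he : (Prod.snd ∘ fun p : X × Z => (T θ p.1, p.2)) = Prod.snd := rfl
      rw [he, h2]
    · exact (integral_map hg.aemeasurable hc.aestronglyMeasurable).symm
  -- Lemma B: any coupling of (T θ)_#μ and ν comes from a coupling of μ and ν
  have lemB : ∀ θ (π : Measure (Z × Z)), π.map Prod.fst = μ.map (T θ) →
      π.map Prod.snd = ν → ∃ σ : Measure (X × Z),
      σ.map Prod.fst = μ ∧ σ.map Prod.snd = ν ∧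
      ∫ p, c (T θ p.1, p.2) ∂σ = ∫ p, c p ∂π := by
    intro θ π h1 h2
    haveI : IsProbabilityMeasure π := aux_prob_of_map_fst h1
    have hfst : π.fst = μ.map (T θ) := h1
    set κ := π.condKernel with hκ
    set κ' := κ.comap (T θ) (hTm θ) with hκ'
    haveI : ProbabilityTheory.IsMarkovKernel κ' :=
      ProbabilityTheory.Kernel.IsMarkovKernel.comap κ (hTm θ)
    have hππ : π.fst ⊗ₘ κ = π := π.disintegrate π.condKernel
    refine ⟨μ ⊗ₘ κ', ?_, ?_, ?_⟩
    · exact Measure.fst_compProd μ κ'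
    · ext s hs
      rw [Measure.map_apply measurable_snd hs,
        Measure.compProd_apply (measurable_snd hs)]
      have hpre : ∀ x : X, (Prod.mk x ⁻¹' (Prod.snd ⁻¹' s)) = s := fun _ => rfl
      simp_rw [hpre, hκ', ProbabilityTheory.Kernel.comap_apply]
      rw [← lintegral_map (κ.measurable_coe hs) (hTm θ), ← hfst]
      have hstep : ∫⁻ y, κ y s ∂π.fst = (π.fst ⊗ₘ κ) (Prod.snd ⁻¹' s) := by
        rw [Measure.compProd_apply (measurable_snd hs)]
        have hpre2 : ∀ y : Z, (Prod.mk y ⁻¹' (Prod.snd ⁻¹' s)) = s := fun _ => rfl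
        simp_rw [hpre2]
      rw [hstep, hππ, ← Measure.map_apply measurable_snd hs, h2]
    · have hcont1 : Continuous (fun p : X × Z => c (T θ p.1, p.2)) :=
        hc.comp (((hTc θ).comp continuous_fst).prodMk continuous_snd)
      have hint1 : Integrable (fun p : X × Z => c (T θ p.1, p.2)) (μ ⊗ₘ κ') :=
        aux_cont_integrable _ hcont1 _
      have hint2 : Integrable c (π.fst ⊗ₘ κ) := by
        rw [hππ]; exact aux_cont_integrable c hc π
      have hsm : AEStronglyMeasurable (fun y => ∫ z, c (y, z) ∂(κ y)) (μ.map (T θ)) :=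
        (hc.stronglyMeasurable.integral_kernel_prod_right' (κ := κ)).aestronglyMeasurable
      calc ∫ p, c (T θ p.1, p.2) ∂(μ ⊗ₘ κ')
          = ∫ x, ∫ z, c (T θ x, z) ∂(κ' x) ∂μ := Measure.integral_compProd hint1
        _ = ∫ x, ∫ z, c (T θ x, z) ∂(κ (T θ x)) ∂μ := by
            simp_rw [hκ', ProbabilityTheory.Kernel.comap_apply]
        _ = ∫ y, ∫ z, c (y, z) ∂(κ y) ∂(μ.map (T θ)) :=
            (integral_map (hTm θ).aemeasurable hsm).symm
        _ = ∫ y, ∫ z, c (y, z) ∂(κ y) ∂(π.fst) := by rw [hfst]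
        _ = ∫ p, c p ∂(π.fst ⊗ₘ κ) := (Measure.integral_compProd hint2).symm
        _ = ∫ p, c p ∂π := by rw [hππ]
  -- key stability estimate
  have key : ∀ (θ θ' : Θ) (ε : ℝ), 0 ≤ ε →
      (∀ x z, |c (T θ x, z) - c (T θ' x, z)| ≤ ε) →
      sInf (S θ) ≤ sInf (S θ') + ε := by
    intro θ θ' ε hε hbound
    have h : ∀ v ∈ S θ', sInf (S θ) - ε ≤ v := by
      rintro v ⟨π, h1, h2, rfl⟩
      obtain ⟨σ, hσ1, hσ2, hσi⟩ := lemB θ' π h1 h2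
      haveI : IsProbabilityMeasure σ := aux_prob_of_map_fst hσ1
      have hcontθ : Continuous (fun p : X × Z => c (T θ p.1, p.2)) :=
        hc.comp (((hTc θ).comp continuous_fst).prodMk continuous_snd)
      have hcontθ' : Continuous (fun p : X × Z => c (T θ' p.1, p.2)) :=
        hc.comp (((hTc θ').comp continuous_fst).prodMk continuous_snd)
      have hi1 : Integrable (fun p : X × Z => c (T θ p.1, p.2)) σ :=
        aux_cont_integrable _ hcontθ _
      have hi1' : Integrable (fun p : X × Z => c (T θ' p.1, p.2)) σ :=
        aux_cont_integrable _ hcontθ' _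
      have hi2 : Integrable (fun p : X × Z => c (T θ' p.1, p.2) + ε) σ :=
        hi1'.add (integrable_const ε)
      have hmono : ∫ p, c (T θ p.1, p.2) ∂σ ≤ ∫ p, (c (T θ' p.1, p.2) + ε) ∂σ :=
        integral_mono hi1 hi2 fun p => by
          have hb := (abs_le.mp (hbound p.1 p.2)).2
          linarith
      have hfinal : sInf (S θ) ≤ ∫ p, c p ∂π + ε := by
        calc sInf (S θ) ≤ ∫ p, c (T θ p.1, p.2) ∂σ := lemA θ σ hσ1 hσ2
          _ ≤ ∫ p, (c (T θ' p.1, p.2) + ε) ∂σ := hmono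
          _ = ∫ p, c (T θ' p.1, p.2) ∂σ + ε := by
              rw [integral_add hi1' (integrable_const ε)]; simp
          _ = ∫ p, c p ∂π + ε := by rw [hσi]
      linarith
    have hle := le_csInf (hne θ') h
    linarith
  -- continuity of θ ↦ W(θ)
  have hWcont : Continuous fun θ => sInf (S θ) := by
    rw [Metric.continuous_iff]
    intro θ₀ ε hε
    have hF : Continuous fun q : Θ × (X × Z) => c (T q.1 q.2.1, q.2.2) :=
      hc.comp ((hT.comp (continuous_fst.prodMk
        (continuous_fst.comp continuous_snd))).prodMk (continuous_snd.comp continuous_snd))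
    have hUF := CompactSpace.uniformContinuous_of_continuous hF
    rw [Metric.uniformContinuous_iff] at hUF
    obtain ⟨δ, hδ, hδ'⟩ := hUF (ε / 2) (by linarith)
    refine ⟨δ, hδ, fun θ hθ => ?_⟩
    have hb : ∀ x z, |c (T θ x, z) - c (T θ₀ x, z)| ≤ ε / 2 := by
      intro x z
      have hd : dist ((θ, (x, z)) : Θ × (X × Z)) (θ₀, (x, z)) < δ := by
        simp only [Prod.dist_eq, dist_self]
        exact max_lt hθ hδ
      have hlt := hδ' hd
      rw [Real.dist_eq] at hlt
      exact le_of_lt hlt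
    have h1 := key θ θ₀ (ε / 2) (by linarith) hb
    have h2 := key θ₀ θ (ε / 2) (by linarith) (fun x z => by
      rw [abs_sub_comm]; exact hb x z)
    rw [Real.dist_eq, abs_sub_lt_iff]
    constructor <;> linarith
  -- minimize the continuous function
  have hfcont : Continuous fun θ => sInf (S θ) + R θ := hWcont.add hR
  obtain ⟨θs, hθs⟩ := hfcont.exists_forall_le' (Classical.arbitrary Θ)
    (by rw [Filter.cocompact_eq_bot]; exact Filter.eventually_bot)
  refine ⟨θs, ?_⟩
  have hAV : alignVal c T R μ ν = ⨅ θ, (sInf (S θ) + R θ) := rfl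
  rw [hW θs, hAV]
  exact le_antisymm (le_ciInf hθs)
    (ciInf_le ⟨sInf (S θs) + R θs, by rintro v ⟨θ, rfl⟩; exact hθs θ⟩ θs)
end

section
/- Lipschitz stability in the Euclidean case: Let μ, μ' ∈ P₂(ℝⁿ), ν, ν' ∈ P₂(ℝ^d) and A, A' ∈ H. Then |W₂(Aᵀ_#μ, ν) − W₂((A')ᵀ_#μ', ν')| ≤ c₀ ‖A − A'‖ + W₂(μ, μ') + W₂(ν, ν'), where c₀ := ( ∫_{ℝⁿ} ‖x‖² dμ(x) )^{1/2} and ‖A − A'‖ is the Frobenius norm. -/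
/-!
`W2` satisfies the triangle inequality on measures with finite second moment: glue two
near-optimal couplings along their common marginal (by disintegration) and apply Minkowski's
inequality in `L²` of the glued measure. This reduces the claim to
`W2 (Aᵀ_#μ) (A'ᵀ_#μ') ≤ W2 (Aᵀ_#μ) (A'ᵀ_#μ) + W2 (A'ᵀ_#μ) (A'ᵀ_#μ')`. The first term is bounded
through the coupling `x ↦ (Aᵀx, A'ᵀx)` of `μ` with itself, whose cost is
`∫ ‖(A - A')ᵀx‖² dμ ≤ ‖A - A'‖² ∫ ‖x‖² dμ`; the second because `A'ᵀ` is `1`-Lipschitz when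
`A'ᵀA' = I`, and pushing a coupling forward by a `1`-Lipschitz map does not increase its cost.
-/

open MeasureTheory Matrix

/-- The 2-Wasserstein distance between Borel probability measures on `ℝ^k`
(vectors as `Fin k → ℝ`, squared Euclidean cost). -/
noncomputable def W2 {k : ℕ} (ρ σ : Measure (Fin k → ℝ)) : ℝ :=
  Real.sqrt (sInf { v : ℝ | ∃ π : Measure ((Fin k → ℝ) × (Fin k → ℝ)),
    π.map Prod.fst = ρ ∧ π.map Prod.snd = σ ∧
    v = ∫ p, ∑ i, (p.1 i - p.2 i) ^ 2 ∂π })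

/-- The Frobenius norm of a real matrix. -/
noncomputable def frobNorm {m k : ℕ} (A : Matrix (Fin m) (Fin k) ℝ) : ℝ :=
  Real.sqrt (∑ i, ∑ j, (A i j) ^ 2)

open ProbabilityTheory

section Gluing

variable {α β γ : Type*} [MeasurableSpace α] [MeasurableSpace β] [MeasurableSpace γ]

lemma map_prodMap_compProd_comap (μ : Measure α) [IsFiniteMeasure μ] (κ : Kernel β γ)
    [IsFiniteKernel κ] {h : α → β} (hh : Measurable h) :
    (μ ⊗ₘ κ.comap h hh).map (Prod.map h id) = μ.map h ⊗ₘ κ := by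
  refine Measure.ext_prod fun {s t} hs ht => ?_
  rw [Measure.map_apply (hh.prodMap measurable_id) (hs.prod ht),
    Set.preimage_prod_map_prod, Set.preimage_id,
    Measure.compProd_apply_prod (hh hs) ht, Measure.compProd_apply_prod hs ht,
    setLIntegral_map hs (κ.measurable_coe ht) hh]
  rfl

lemma exists_glued_measure [StandardBorelSpace γ] [Nonempty γ]
    (π₁ : Measure (α × β)) (π₂ : Measure (β × γ)) [IsFiniteMeasure π₁] [IsFiniteMeasure π₂]
    (h : π₁.map Prod.snd = π₂.map Prod.fst) :
    ∃ P : Measure ((α × β) × γ), P.map Prod.fst = π₁ ∧ P.map (Prod.map Prod.snd id) = π₂ := by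
  refine ⟨π₁ ⊗ₘ π₂.condKernel.comap Prod.snd measurable_snd, Measure.fst_compProd _ _, ?_⟩
  rw [map_prodMap_compProd_comap, h]
  exact π₂.disintegrate _

end Gluing

lemma isProbabilityMeasure_of_map_eq {α β : Type*} [MeasurableSpace α] [MeasurableSpace β]
    {μ : Measure α} {ν : Measure β} [IsProbabilityMeasure ν] {f : α → β} (h : μ.map f = ν) :
    IsProbabilityMeasure μ := by
  subst h
  exact Measure.isProbabilityMeasure_of_map f

section Wasserstein

variable {k : ℕ}

def sqDist (p : (Fin k → ℝ) × (Fin k → ℝ)) : ℝ := ∑ i, (p.1 i - p.2 i) ^ 2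

lemma sqDist_nonneg (p : (Fin k → ℝ) × (Fin k → ℝ)) : 0 ≤ sqDist p :=
  Finset.sum_nonneg fun _ _ => sq_nonneg _

lemma sqDist_swap (p : (Fin k → ℝ) × (Fin k → ℝ)) : sqDist p.swap = sqDist p :=
  Finset.sum_congr rfl fun _ _ => by simp only [Prod.fst_swap, Prod.snd_swap]; ring

lemma sum_sq_eq_norm_toLp_sq (x : Fin k → ℝ) : ∑ i, x i ^ 2 = ‖WithLp.toLp 2 x‖ ^ 2 := by
  simp [EuclideanSpace.real_norm_sq_eq]

lemma sqDist_eq_norm_sq (p : (Fin k → ℝ) × (Fin k → ℝ)) :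
    sqDist p = ‖WithLp.toLp 2 p.1 - WithLp.toLp 2 p.2‖ ^ 2 := by
  rw [← WithLp.toLp_sub, ← sum_sq_eq_norm_toLp_sq]; rfl

lemma continuous_sqDist : Continuous (sqDist (k := k)) := by unfold sqDist; fun_prop

def transportCosts (ρ σ : Measure (Fin k → ℝ)) : Set ℝ :=
  {v | ∃ π : Measure ((Fin k → ℝ) × (Fin k → ℝ)),
    π.map Prod.fst = ρ ∧ π.map Prod.snd = σ ∧ v = ∫ p, sqDist p ∂π}

lemma W2_nonneg (ρ σ : Measure (Fin k → ℝ)) : 0 ≤ W2 ρ σ := Real.sqrt_nonneg _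

lemma transportCosts_nonneg {ρ σ : Measure (Fin k → ℝ)} {v : ℝ} (hv : v ∈ transportCosts ρ σ) :
    0 ≤ v := by
  obtain ⟨_, _, _, rfl⟩ := hv
  exact integral_nonneg sqDist_nonneg

lemma W2_le_sqrt_integral_sqDist {ρ σ : Measure (Fin k → ℝ)}
    {π : Measure ((Fin k → ℝ) × (Fin k → ℝ))} (h₁ : π.map Prod.fst = ρ)
    (h₂ : π.map Prod.snd = σ) :
    W2 ρ σ ≤ √(∫ p, sqDist p ∂π) :=
  Real.sqrt_le_sqrt <| csInf_le ⟨0, fun _ => transportCosts_nonneg⟩ ⟨π, h₁, h₂, rfl⟩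

lemma exists_coupling_sqrt_integral_sqDist_le (ρ σ : Measure (Fin k → ℝ))
    [IsProbabilityMeasure ρ] [IsProbabilityMeasure σ] {ε : ℝ} (hε : 0 < ε) :
    ∃ π : Measure ((Fin k → ℝ) × (Fin k → ℝ)), π.map Prod.fst = ρ ∧ π.map Prod.snd = σ ∧
      √(∫ p, sqDist p ∂π) ≤ W2 ρ σ + ε := by
  have hne : (transportCosts ρ σ).Nonempty := ⟨_, ρ.prod σ, by simp, by simp, rfl⟩
  obtain ⟨_, ⟨π, h₁, h₂, rfl⟩, hπ⟩ := Real.lt_sInf_add_pos hne (pow_pos hε 2)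
  have hW2_sq : W2 ρ σ ^ 2 = sInf (transportCosts ρ σ) :=
    Real.sq_sqrt (Real.sInf_nonneg fun _ => transportCosts_nonneg)
  refine ⟨π, h₁, h₂, Real.sqrt_le_iff.2 ⟨by linarith [W2_nonneg ρ σ], ?_⟩⟩
  nlinarith [W2_nonneg ρ σ]

lemma W2_map_le {α : Type*} [MeasurableSpace α] (μ : Measure α) {f g : α → Fin k → ℝ}
    (hf : Measurable f) (hg : Measurable g) :
    W2 (μ.map f) (μ.map g) ≤ √(∫ a, sqDist (f a, g a) ∂μ) := by
  have hfg : Measurable fun a => (f a, g a) := hf.prodMk hg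
  rw [← integral_map hfg.aemeasurable continuous_sqDist.aestronglyMeasurable]
  exact W2_le_sqrt_integral_sqDist (by rw [Measure.map_map measurable_fst hfg]; rfl)
    (by rw [Measure.map_map measurable_snd hfg]; rfl)

lemma W2_comm_le (ρ σ : Measure (Fin k → ℝ)) [IsProbabilityMeasure ρ] [IsProbabilityMeasure σ] :
    W2 σ ρ ≤ W2 ρ σ := by
  refine le_of_forall_pos_le_add fun ε hε => ?_
  obtain ⟨π, rfl, rfl, hπ⟩ := exists_coupling_sqrt_integral_sqDist_le ρ σ hε
  calc W2 (π.map Prod.snd) (π.map Prod.fst) ≤ √(∫ p, sqDist p.swap ∂π) :=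
        W2_map_le π measurable_snd measurable_fst
    _ ≤ _ := by simpa only [sqDist_swap] using hπ

lemma W2_comm (ρ σ : Measure (Fin k → ℝ)) [IsProbabilityMeasure ρ] [IsProbabilityMeasure σ] :
    W2 ρ σ = W2 σ ρ :=
  le_antisymm (W2_comm_le σ ρ) (W2_comm_le ρ σ)

lemma memLp_toLp_comp {α : Type*} [MeasurableSpace α] {μ : Measure α} {ρ : Measure (Fin k → ℝ)}
    {X : α → Fin k → ℝ} (hX : Measurable X) (hμ : μ.map X = ρ)
    (hρ : Integrable (fun x => ∑ i, x i ^ 2) ρ) :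
    MemLp (fun a => WithLp.toLp 2 (X a)) 2 μ := by
  have hρ' : MemLp (WithLp.toLp 2) 2 ρ := by
    rw [memLp_two_iff_integrable_sq_norm (by fun_prop)]
    simpa only [sum_sq_eq_norm_toLp_sq] using hρ
  exact (hμ ▸ hρ').comp_of_map hX.aemeasurable

lemma integrable_sqDist {ρ σ : Measure (Fin k → ℝ)} {π : Measure ((Fin k → ℝ) × (Fin k → ℝ))}
    (h₁ : π.map Prod.fst = ρ) (h₂ : π.map Prod.snd = σ)
    (hρ : Integrable (fun x => ∑ i, x i ^ 2) ρ) (hσ : Integrable (fun x => ∑ i, x i ^ 2) σ) :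
    Integrable sqDist π := by
  have hdiff := (memLp_toLp_comp measurable_fst h₁ hρ).sub (memLp_toLp_comp measurable_snd h₂ hσ)
  rw [memLp_two_iff_integrable_sq_norm hdiff.aestronglyMeasurable] at hdiff
  convert hdiff using 2 with p
  exact sqDist_eq_norm_sq p

lemma sqrt_integral_sqDist_map {α : Type*} [MeasurableSpace α] (μ : Measure α)
    {T : α → (Fin k → ℝ) × (Fin k → ℝ)} (hT : Measurable T) :
    √(∫ p, sqDist p ∂μ.map T) =
      lpNorm (fun a => WithLp.toLp 2 (T a).1 - WithLp.toLp 2 (T a).2) 2 μ := by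
  rw [integral_map hT.aemeasurable continuous_sqDist.aestronglyMeasurable,
    lpNorm_eq_integral_norm_rpow_toReal two_ne_zero ENNReal.ofNat_ne_top (by fun_prop)]
  simp [sqDist_eq_norm_sq, Real.sqrt_eq_rpow]

-- The Bochner integral of a non-integrable cost is `0`, so without second moments the
-- infimum defining `W2` can be a junk `0` and the inequality can fail.
lemma W2_triangle (ρ₁ ρ₂ ρ₃ : Measure (Fin k → ℝ))
    [IsProbabilityMeasure ρ₁] [IsProbabilityMeasure ρ₂] [IsProbabilityMeasure ρ₃]
    (h₁ : Integrable (fun x => ∑ i, x i ^ 2) ρ₁) (h₂ : Integrable (fun x => ∑ i, x i ^ 2) ρ₂) :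
    W2 ρ₁ ρ₃ ≤ W2 ρ₁ ρ₂ + W2 ρ₂ ρ₃ := by
  refine le_of_forall_pos_le_add fun ε hε => ?_
  obtain ⟨π₁, hπ₁₁, hπ₁₂, hπ₁⟩ := exists_coupling_sqrt_integral_sqDist_le ρ₁ ρ₂ (half_pos hε)
  obtain ⟨π₂, hπ₂₁, hπ₂₂, hπ₂⟩ := exists_coupling_sqrt_integral_sqDist_le ρ₂ ρ₃ (half_pos hε)
  have := isProbabilityMeasure_of_map_eq hπ₁₁
  have := isProbabilityMeasure_of_map_eq hπ₂₁
  obtain ⟨P, hP₁, hP₂⟩ := exists_glued_measure π₁ π₂ (hπ₁₂.trans hπ₂₁.symm)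
  have hT : Measurable (Prod.map Prod.fst id : ((Fin k → ℝ) × (Fin k → ℝ)) × (Fin k → ℝ) → _) :=
    by fun_prop
  have hP₁₁ : P.map (fun x => x.1.1) = ρ₁ := by
    rw [← hπ₁₁, ← hP₁, Measure.map_map measurable_fst measurable_fst]; rfl
  have hP₁₂ : P.map (fun x => x.1.2) = ρ₂ := by
    rw [← hπ₁₂, ← hP₁, Measure.map_map measurable_snd measurable_fst]; rfl
  have hP₂₂ : P.map (fun x => x.2) = ρ₃ := by
    rw [← hπ₂₂, ← hP₂, Measure.map_map measurable_snd (by fun_prop)]; rfl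
  set X₁ : ((Fin k → ℝ) × (Fin k → ℝ)) × (Fin k → ℝ) → EuclideanSpace ℝ (Fin k) :=
    fun x => WithLp.toLp 2 x.1.1
  set X₂ : ((Fin k → ℝ) × (Fin k → ℝ)) × (Fin k → ℝ) → EuclideanSpace ℝ (Fin k) :=
    fun x => WithLp.toLp 2 x.1.2
  set X₃ : ((Fin k → ℝ) × (Fin k → ℝ)) × (Fin k → ℝ) → EuclideanSpace ℝ (Fin k) :=
    fun x => WithLp.toLp 2 x.2
  have hX₁ : MemLp X₁ 2 P := memLp_toLp_comp measurable_fst.fst hP₁₁ h₁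
  have hX₂ : MemLp X₂ 2 P := memLp_toLp_comp measurable_fst.snd hP₁₂ h₂
  calc W2 ρ₁ ρ₃ ≤ √(∫ p, sqDist p ∂P.map (Prod.map Prod.fst id)) := by
        refine W2_le_sqrt_integral_sqDist ?_ ?_
        · rwa [Measure.map_map measurable_fst hT]
        · rwa [Measure.map_map measurable_snd hT]
    _ = lpNorm (X₁ - X₃) 2 P := sqrt_integral_sqDist_map P hT
    _ ≤ lpNorm (X₁ - X₂) 2 P + lpNorm (X₂ - X₃) 2 P :=
        lpNorm_sub_le_lpNorm_sub_add_lpNorm_sub hX₁ hX₂ one_le_two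
    _ = √(∫ p, sqDist p ∂π₁) + √(∫ p, sqDist p ∂π₂) := by
        rw [← hP₁, ← hP₂, sqrt_integral_sqDist_map P measurable_fst,
          sqrt_integral_sqDist_map P (by fun_prop)]
        rfl
    _ ≤ W2 ρ₁ ρ₂ + W2 ρ₂ ρ₃ + ε := by linarith

lemma abs_W2_sub_W2_le (ρ σ ρ' σ' : Measure (Fin k → ℝ))
    [IsProbabilityMeasure ρ] [IsProbabilityMeasure σ]
    [IsProbabilityMeasure ρ'] [IsProbabilityMeasure σ']
    (hρ : Integrable (fun x => ∑ i, x i ^ 2) ρ) (hσ : Integrable (fun x => ∑ i, x i ^ 2) σ)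
    (hρ' : Integrable (fun x => ∑ i, x i ^ 2) ρ') (hσ' : Integrable (fun x => ∑ i, x i ^ 2) σ') :
    |W2 ρ σ - W2 ρ' σ'| ≤ W2 ρ ρ' + W2 σ σ' := by
  have h₁ := W2_triangle ρ ρ' σ hρ hρ'
  have h₂ := W2_triangle ρ' σ' σ hρ' hσ'
  have h₃ := W2_triangle ρ' ρ σ' hρ' hρ
  have h₄ := W2_triangle ρ σ σ' hρ hσ
  rw [W2_comm σ' σ] at h₂
  rw [W2_comm ρ' ρ] at h₃
  rw [abs_sub_le_iff]
  constructor <;> linarith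

end Wasserstein

section Pushforward

variable {n d : ℕ}

lemma W2_map_le_W2 {f : (Fin n → ℝ) → Fin d → ℝ} (hf : Measurable f)
    (hf_contr : ∀ x y, sqDist (f x, f y) ≤ sqDist (x, y))
    (ρ σ : Measure (Fin n → ℝ)) [IsProbabilityMeasure ρ] [IsProbabilityMeasure σ]
    (hρ : Integrable (fun x => ∑ i, x i ^ 2) ρ) (hσ : Integrable (fun x => ∑ i, x i ^ 2) σ) :
    W2 (ρ.map f) (σ.map f) ≤ W2 ρ σ := by
  refine le_of_forall_pos_le_add fun ε hε => ?_
  obtain ⟨π, h₁, h₂, hπ⟩ := exists_coupling_sqrt_integral_sqDist_le ρ σ hε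
  calc W2 (ρ.map f) (σ.map f) = W2 (π.map (f ∘ Prod.fst)) (π.map (f ∘ Prod.snd)) := by
        rw [← Measure.map_map hf measurable_fst, ← Measure.map_map hf measurable_snd, h₁, h₂]
    _ ≤ √(∫ p, sqDist (f p.1, f p.2) ∂π) :=
        W2_map_le π (hf.comp measurable_fst) (hf.comp measurable_snd)
    _ ≤ √(∫ p, sqDist p ∂π) :=
        Real.sqrt_le_sqrt <| integral_mono_of_nonneg (ae_of_all _ fun _ => sqDist_nonneg _)
          (integrable_sqDist h₁ h₂ hρ hσ) (ae_of_all _ fun p => hf_contr p.1 p.2)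
    _ ≤ W2 ρ σ + ε := hπ

lemma integrable_sum_sq_map {f : (Fin n → ℝ) → Fin d → ℝ} (hf : Measurable f) {C : ℝ}
    (hfC : ∀ x, ∑ j, f x j ^ 2 ≤ C * ∑ i, x i ^ 2) {μ : Measure (Fin n → ℝ)}
    (hμ : Integrable (fun x => ∑ i, x i ^ 2) μ) :
    Integrable (fun z => ∑ j, z j ^ 2) (μ.map f) := by
  have hsum : Measurable fun z : Fin d → ℝ => ∑ j, z j ^ 2 := by fun_prop
  rw [integrable_map_measure hsum.aestronglyMeasurable hf.aemeasurable]
  refine (hμ.const_mul C).mono' (hsum.comp hf).aestronglyMeasurable (ae_of_all _ fun x => ?_)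
  rw [Function.comp_apply, Real.norm_of_nonneg (Finset.sum_nonneg fun _ _ => sq_nonneg _)]
  exact hfC x

lemma sum_sq_transpose_mulVec_le (M : Matrix (Fin n) (Fin d) ℝ) (x : Fin n → ℝ) :
    ∑ j, (Mᵀ *ᵥ x) j ^ 2 ≤ frobNorm M ^ 2 * ∑ i, x i ^ 2 := by
  rw [frobNorm, Real.sq_sqrt (by positivity), Finset.sum_comm, Finset.sum_mul]
  refine Finset.sum_le_sum fun j _ => ?_
  simpa [Matrix.mulVec, dotProduct] using Finset.sum_mul_sq_le_sq_mul_sq Finset.univ (M · j) x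

lemma sum_sq_transpose_mulVec_le_of_orthonormal {B : Matrix (Fin n) (Fin d) ℝ} (hB : Bᵀ * B = 1)
    (u : Fin n → ℝ) :
    ∑ j, (Bᵀ *ᵥ u) j ^ 2 ≤ ∑ i, u i ^ 2 := by
  set v := Bᵀ *ᵥ u
  have hBv : (B *ᵥ v) ⬝ᵥ (B *ᵥ v) = v ⬝ᵥ v := by
    rw [dotProduct_mulVec, ← mulVec_transpose, mulVec_mulVec, hB, one_mulVec]
  have hu_Bv : u ⬝ᵥ (B *ᵥ v) = v ⬝ᵥ v := by
    rw [dotProduct_mulVec, ← mulVec_transpose]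
  have h : 0 ≤ (u - B *ᵥ v) ⬝ᵥ (u - B *ᵥ v) := Finset.sum_nonneg fun _ _ => mul_self_nonneg _
  rw [sub_dotProduct, dotProduct_sub, dotProduct_sub, hBv, dotProduct_comm (B *ᵥ v), hu_Bv] at h
  simp only [dotProduct, ← sq] at h
  linarith

instance isProbabilityMeasure_map_mulVec {m : ℕ} (M : Matrix (Fin m) (Fin n) ℝ)
    (μ : Measure (Fin n → ℝ)) [IsProbabilityMeasure μ] : IsProbabilityMeasure (μ.map M.mulVec) :=
  Measure.isProbabilityMeasure_map (by fun_prop)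

lemma integrable_sum_sq_map_transpose_mulVec {B : Matrix (Fin n) (Fin d) ℝ} (hB : Bᵀ * B = 1)
    {μ : Measure (Fin n → ℝ)} (hμ : Integrable (fun x => ∑ i, x i ^ 2) μ) :
    Integrable (fun z => ∑ j, z j ^ 2) (μ.map Bᵀ.mulVec) :=
  integrable_sum_sq_map (by fun_prop) (C := 1)
    (by simpa using sum_sq_transpose_mulVec_le_of_orthonormal hB) hμ

lemma W2_map_transpose_mulVec_le_W2 {B : Matrix (Fin n) (Fin d) ℝ} (hB : Bᵀ * B = 1)
    (ρ σ : Measure (Fin n → ℝ)) [IsProbabilityMeasure ρ] [IsProbabilityMeasure σ]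
    (hρ : Integrable (fun x => ∑ i, x i ^ 2) ρ) (hσ : Integrable (fun x => ∑ i, x i ^ 2) σ) :
    W2 (ρ.map Bᵀ.mulVec) (σ.map Bᵀ.mulVec) ≤ W2 ρ σ :=
  W2_map_le_W2 (by fun_prop) (fun x y => by
    simpa [sqDist, mulVec_sub] using sum_sq_transpose_mulVec_le_of_orthonormal hB (x - y))
    ρ σ hρ hσ

lemma W2_map_transpose_mulVec_le (B C : Matrix (Fin n) (Fin d) ℝ) (μ : Measure (Fin n → ℝ))
    (hμ : Integrable (fun x => ∑ i, x i ^ 2) μ) :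
    W2 (μ.map Bᵀ.mulVec) (μ.map Cᵀ.mulVec) ≤ √(∫ x, ∑ i, x i ^ 2 ∂μ) * frobNorm (B - C) := by
  calc W2 (μ.map Bᵀ.mulVec) (μ.map Cᵀ.mulVec) ≤ √(∫ x, sqDist (Bᵀ *ᵥ x, Cᵀ *ᵥ x) ∂μ) :=
        W2_map_le μ (by fun_prop) (by fun_prop)
    _ ≤ √(∫ x, frobNorm (B - C) ^ 2 * ∑ i, x i ^ 2 ∂μ) := by
        refine Real.sqrt_le_sqrt <| integral_mono_of_nonneg
          (ae_of_all _ fun _ => sqDist_nonneg _) (hμ.const_mul _) (ae_of_all _ fun x => ?_)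
        simpa [sqDist, transpose_sub, sub_mulVec] using sum_sq_transpose_mulVec_le (B - C) x
    _ = √(∫ x, ∑ i, x i ^ 2 ∂μ) * frobNorm (B - C) := by
        rw [integral_const_mul, Real.sqrt_mul (sq_nonneg _),
          Real.sqrt_sq (show 0 ≤ frobNorm (B - C) from Real.sqrt_nonneg _), mul_comm]

end Pushforward

theorem lipschitz_stability_euclidean_general
    {n d : ℕ}
    (μ μ' : Measure (Fin n → ℝ)) [IsProbabilityMeasure μ] [IsProbabilityMeasure μ']
    (ν ν' : Measure (Fin d → ℝ)) [IsProbabilityMeasure ν] [IsProbabilityMeasure ν']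
    (hμ2 : Integrable (fun x => ∑ i, (x i) ^ 2) μ)
    (hμ'2 : Integrable (fun x => ∑ i, (x i) ^ 2) μ')
    (hν2 : Integrable (fun z => ∑ j, (z j) ^ 2) ν)
    (hν'2 : Integrable (fun z => ∑ j, (z j) ^ 2) ν')
    (A A' : Matrix (Fin n) (Fin d) ℝ)
    (hA : Aᵀ * A = 1) (hA' : A'ᵀ * A' = 1) :
    |W2 (μ.map Aᵀ.mulVec) ν - W2 (μ'.map A'ᵀ.mulVec) ν'|
      ≤ Real.sqrt (∫ x, ∑ i, (x i) ^ 2 ∂μ) * frobNorm (A - A')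
        + W2 μ μ' + W2 ν ν' := by
  have hAμ2 := integrable_sum_sq_map_transpose_mulVec hA hμ2
  have hA'μ2 := integrable_sum_sq_map_transpose_mulVec hA' hμ2
  have hA'μ'2 := integrable_sum_sq_map_transpose_mulVec hA' hμ'2
  calc |W2 (μ.map Aᵀ.mulVec) ν - W2 (μ'.map A'ᵀ.mulVec) ν'|
      ≤ W2 (μ.map Aᵀ.mulVec) (μ'.map A'ᵀ.mulVec) + W2 ν ν' :=
        abs_W2_sub_W2_le _ _ _ _ hAμ2 hν2 hA'μ'2 hν'2
    _ ≤ W2 (μ.map Aᵀ.mulVec) (μ.map A'ᵀ.mulVec) + W2 (μ.map A'ᵀ.mulVec) (μ'.map A'ᵀ.mulVec)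
        + W2 ν ν' := by
        gcongr
        exact W2_triangle _ _ _ hAμ2 hA'μ2
    _ ≤ √(∫ x, ∑ i, x i ^ 2 ∂μ) * frobNorm (A - A') + W2 μ μ' + W2 ν ν' := by
        gcongr
        · exact W2_map_transpose_mulVec_le A A' μ hμ2
        · exact W2_map_transpose_mulVec_le_W2 hA' μ μ' hμ2 hμ'2

/-- Lipschitz stability in the Euclidean case:
`|W₂(Aᵀ_#μ, ν) − W₂((A')ᵀ_#μ', ν')| ≤ c₀‖A − A'‖ + W₂(μ,μ') + W₂(ν,ν')`
with `c₀ = (∫ ‖x‖² dμ)^{1/2}`. -/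
theorem lipschitz_stability_euclidean
    {n d : ℕ} (hd : 1 ≤ d) (hnd : d ≤ n)
    (μ μ' : Measure (Fin n → ℝ)) [IsProbabilityMeasure μ] [IsProbabilityMeasure μ']
    (ν ν' : Measure (Fin d → ℝ)) [IsProbabilityMeasure ν] [IsProbabilityMeasure ν']
    (hμ2 : Integrable (fun x => ∑ i, (x i) ^ 2) μ)
    (hμ'2 : Integrable (fun x => ∑ i, (x i) ^ 2) μ')
    (hν2 : Integrable (fun z => ∑ j, (z j) ^ 2) ν)
    (hν'2 : Integrable (fun z => ∑ j, (z j) ^ 2) ν')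
    (A A' : Matrix (Fin n) (Fin d) ℝ)
    (hA : Aᵀ * A = 1) (hA' : A'ᵀ * A' = 1) :
    |W2 (μ.map Aᵀ.mulVec) ν - W2 (μ'.map A'ᵀ.mulVec) ν'|
      ≤ Real.sqrt (∫ x, ∑ i, (x i) ^ 2 ∂μ) * frobNorm (A - A')
        + W2 μ μ' + W2 ν ν' :=
  lipschitz_stability_euclidean_general μ μ' ν ν' hμ2 hμ'2 hν2 hν'2 A A' hA hA'
end

section
/- Strict monotonicity of the deviation from the Gaussian quantile map: Let c ∈ ℝ with c ≠ 0, let Φ denote the cumulative distribution function of the standard normal distribution N(0,1), and let h : ℝ → ℝ be a function satisfying Φ(h(t)) = (1/2) Φ(t − c) + (1/2) Φ(t + c) for all t ∈ ℝ. Then the function F(t) := t − h(t) is strictly increasing on ℝ. -/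
/-!
If `Φ x` is the average of `Φ a` and `Φ b` with `a < x < b`, the Gaussian density `φ` has the
same mass on `[a, x]` and on `[x, b]`. Shifting everything by `s > 0` multiplies `φ` by the
strictly decreasing factor `φ (r + s) / φ r = exp (-s r - s² / 2)`, so afterwards `[a + s, x + s]`
carries strictly more mass than `[x + s, b + s]`, i.e. `Φ (x + s)` exceeds the average of
`Φ (a + s)` and `Φ (b + s)`. With `x = h t₁`, `a, b = t₁ ∓ c` and `s = t₂ - t₁` this says
`h t₂ < h t₁ + (t₂ - t₁)`.
-/

open MeasureTheory

/-- The standard normal cumulative distribution function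
`Φ(t) = ∫_{−∞}^t (1/√(2π)) e^{−u²/2} du`. -/
noncomputable def stdNormalCDF (t : ℝ) : ℝ :=
  ∫ u in Set.Iic t, Real.exp (-u ^ 2 / 2) / Real.sqrt (2 * Real.pi)

open Set

section WeightedIntegral

variable {f w : ℝ → ℝ} {a b : ℝ}

theorem integral_mul_lt_mul_integral_of_strictAntiOn (hab : a < b)
    (hf : ContinuousOn f (Icc a b)) (hw : ContinuousOn w (Icc a b))
    (hf_pos : ∀ r ∈ Ioo a b, 0 < f r) (hw_anti : StrictAntiOn w (Icc a b)) :
    ∫ r in a..b, w r * f r < w a * ∫ r in a..b, f r := by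
  have hcont : ContinuousOn (fun r => (w a - w r) * f r) (uIcc a b) := by
    rw [uIcc_of_le hab.le]; fun_prop
  have hpos : 0 < ∫ r in a..b, (w a - w r) * f r :=
    intervalIntegral.intervalIntegral_pos_of_pos_on hcont.intervalIntegrable
      (fun r hr => mul_pos (sub_pos.2 (hw_anti (left_mem_Icc.2 hab.le) (Ioo_subset_Icc_self hr)
        hr.1)) (hf_pos r hr)) hab
  simp only [sub_mul] at hpos
  rw [intervalIntegral.integral_sub, intervalIntegral.integral_const_mul] at hpos
  · linarith
  · exact (hf.mono (uIcc_of_le hab.le).subset).intervalIntegrable.const_mul _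
  · exact ((hw.mul hf).mono (uIcc_of_le hab.le).subset).intervalIntegrable

theorem mul_integral_lt_integral_mul_of_strictAntiOn (hab : a < b)
    (hf : ContinuousOn f (Icc a b)) (hw : ContinuousOn w (Icc a b))
    (hf_pos : ∀ r ∈ Ioo a b, 0 < f r) (hw_anti : StrictAntiOn w (Icc a b)) :
    w b * ∫ r in a..b, f r < ∫ r in a..b, w r * f r := by
  have hcont : ContinuousOn (fun r => (w r - w b) * f r) (uIcc a b) := by
    rw [uIcc_of_le hab.le]; fun_prop
  have hpos : 0 < ∫ r in a..b, (w r - w b) * f r :=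
    intervalIntegral.intervalIntegral_pos_of_pos_on hcont.intervalIntegrable
      (fun r hr => mul_pos (sub_pos.2 (hw_anti (Ioo_subset_Icc_self hr) (right_mem_Icc.2 hab.le)
        hr.2)) (hf_pos r hr)) hab
  simp only [sub_mul] at hpos
  rw [intervalIntegral.integral_sub, intervalIntegral.integral_const_mul] at hpos
  · linarith
  · exact ((hw.mul hf).mono (uIcc_of_le hab.le).subset).intervalIntegrable
  · exact (hf.mono (uIcc_of_le hab.le).subset).intervalIntegrable.const_mul _

end WeightedIntegral

noncomputable def stdNormalPDF (u : ℝ) : ℝ :=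
  Real.exp (-u ^ 2 / 2) / Real.sqrt (2 * Real.pi)

theorem stdNormalPDF_pos (u : ℝ) : 0 < stdNormalPDF u := by
  unfold stdNormalPDF; positivity

@[fun_prop]
theorem continuous_stdNormalPDF : Continuous stdNormalPDF := by
  unfold stdNormalPDF; fun_prop

theorem integrable_stdNormalPDF : Integrable stdNormalPDF := by
  refine ((integrable_exp_neg_mul_sq (b := 1 / 2) (by norm_num)).div_const
    (Real.sqrt (2 * Real.pi))).congr (.of_forall fun u => ?_)
  unfold stdNormalPDF
  ring_nf

theorem stdNormalPDF_add (r s : ℝ) :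
    stdNormalPDF (r + s) = Real.exp (-s * r - s ^ 2 / 2) * stdNormalPDF r := by
  unfold stdNormalPDF
  rw [mul_div_assoc', ← Real.exp_add]
  ring_nf

theorem stdNormalCDF_sub_stdNormalCDF (a b : ℝ) :
    stdNormalCDF b - stdNormalCDF a = ∫ r in a..b, stdNormalPDF r :=
  intervalIntegral.integral_Iic_sub_Iic integrable_stdNormalPDF.integrableOn
    integrable_stdNormalPDF.integrableOn

theorem stdNormalCDF_strictMono : StrictMono stdNormalCDF := fun a b hab => by
  have hpos : 0 < ∫ r in a..b, stdNormalPDF r :=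
    intervalIntegral.intervalIntegral_pos_of_pos
      (continuous_stdNormalPDF.intervalIntegrable a b) stdNormalPDF_pos hab
  linarith [stdNormalCDF_sub_stdNormalCDF a b]

theorem stdNormalCDF_average_add_lt {a b x s : ℝ} (hab : a ≠ b) (hs : 0 < s)
    (hx : stdNormalCDF x = 1 / 2 * stdNormalCDF a + 1 / 2 * stdNormalCDF b) :
    1 / 2 * stdNormalCDF (a + s) + 1 / 2 * stdNormalCDF (b + s) < stdNormalCDF (x + s) := by
  wlog hlt : a < b generalizing a b
  · linarith [this hab.symm (by linarith) (hab.lt_or_gt.resolve_left hlt)]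
  have hΦab := stdNormalCDF_strictMono hlt
  have hax : a < x := stdNormalCDF_strictMono.lt_iff_lt.1 (by linarith)
  have hxb : x < b := stdNormalCDF_strictMono.lt_iff_lt.1 (by linarith)
  set w : ℝ → ℝ := fun r => Real.exp (-s * r - s ^ 2 / 2)
  have hw : Continuous w := by fun_prop
  have hw_anti : StrictAnti w := fun r r' hrr' => Real.exp_lt_exp.2 (by nlinarith)
  have hshift (p q : ℝ) :
      stdNormalCDF (q + s) - stdNormalCDF (p + s) = ∫ r in p..q, w r * stdNormalPDF r := by
    simp only [w, stdNormalCDF_sub_stdNormalCDF, ← stdNormalPDF_add,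
      intervalIntegral.integral_comp_add_right]
  have hleft := mul_integral_lt_integral_mul_of_strictAntiOn hax
    continuous_stdNormalPDF.continuousOn hw.continuousOn (fun r _ => stdNormalPDF_pos r)
    (hw_anti.strictAntiOn _)
  have hright := integral_mul_lt_mul_integral_of_strictAntiOn hxb
    continuous_stdNormalPDF.continuousOn hw.continuousOn (fun r _ => stdNormalPDF_pos r)
    (hw_anti.strictAntiOn _)
  rw [← hshift, ← stdNormalCDF_sub_stdNormalCDF] at hleft hright
  have hbalanced : stdNormalCDF x - stdNormalCDF a = stdNormalCDF b - stdNormalCDF x := by linarith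
  rw [hbalanced] at hleft
  linarith

/-- Strict monotonicity of the deviation from the Gaussian quantile map: if `c ≠ 0` and
`h : ℝ → ℝ` satisfies `Φ(h(t)) = (1/2)Φ(t−c) + (1/2)Φ(t+c)` for all `t`, then
`F(t) = t − h(t)` is strictly increasing. -/
theorem deviation_from_gaussian_quantile_strictMono
    (c : ℝ) (hc : c ≠ 0) (h : ℝ → ℝ)
    (hh : ∀ t, stdNormalCDF (h t)
      = (1 / 2) * stdNormalCDF (t - c) + (1 / 2) * stdNormalCDF (t + c)) :
    StrictMono (fun t => t - h t) := by
  intro t₁ t₂ ht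
  have hlt := stdNormalCDF_average_add_lt (s := t₂ - t₁) (by contrapose! hc; linarith)
    (sub_pos.2 ht) (hh t₁)
  rw [show t₁ - c + (t₂ - t₁) = t₂ - c by ring, show t₁ + c + (t₂ - t₁) = t₂ + c by ring,
    ← hh t₂] at hlt
  linarith [stdNormalCDF_strictMono.lt_iff_lt.1 hlt]
end
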